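/- Let p, q ≥ 0 with p + q = 1, let α₀ ∈ (0,1), and define the sequence (α_n) recursively by α_{n+1} = α_n(α_n + 2p(1−α_n)). If p > 1/2 then α_n → 1 as n → ∞, and if p < 1/2 then α_n → 0 as n → ∞. -/
import Mathlib


open Filter Topology

/-- for p, q ≥ 0 with p + q = 1 and α₀ ∈ (0,1), the sequence defined by
α_{n+1} = α_n(α_n + 2p(1−α_n)) tends to 1 if p > 1/2 and to 0 if p < 1/2. -/
theorem two_point_recursion_limit (p q : ℝ) (hp : 0 ≤ p) (hq : 0 ≤ q) (hpq : p + q = 1)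
    (α : ℕ → ℝ) (h0 : α 0 ∈ Set.Ioo (0:ℝ) 1)
    (hrec : ∀ n, α (n+1) = α n * (α n + 2*p*(1 - α n))) :
    (p > 1/2 → Tendsto α atTop (𝓝 1)) ∧ (p < 1/2 → Tendsto α atTop (𝓝 0)) := by
  have hp1 : p ≤ 1 := by linarith
  have hIoo : ∀ n, α n ∈ Set.Ioo (0:ℝ) 1 := by
    intro n
    induction n with
    | zero => exact h0
    | succ k ih =>
      obtain ⟨h1, h2⟩ := ih
      rw [hrec k]
      constructor
      · nlinarith [mul_pos h1 h1, mul_nonneg (mul_nonneg hp h1.le) (by linarith : (0:ℝ) ≤ 1 - α k)]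
      · nlinarith [mul_pos (sub_pos.2 h2) (sub_pos.2 h2),
          mul_nonneg (mul_nonneg (by linarith : (0:ℝ) ≤ 1 - p) h1.le)
            (by linarith : (0:ℝ) ≤ 1 - α k)]
  -- limit identification helper
  have hfix : ∀ L : ℝ, Tendsto α atTop (𝓝 L) → L * (L + 2*p*(1 - L)) = L := by
    intro L hL
    have h1 : Tendsto (fun n => α (n+1)) atTop (𝓝 L) :=
      hL.comp (tendsto_add_atTop_nat 1)
    have h2 : Tendsto (fun n => α n * (α n + 2*p*(1 - α n))) atTop
        (𝓝 (L * (L + 2*p*(1 - L)))) := by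
      exact (hL.mul (hL.add (tendsto_const_nhds.mul ((tendsto_const_nhds.sub hL)))))
    have h3 : Tendsto (fun n => α (n+1)) atTop (𝓝 (L * (L + 2*p*(1 - L)))) := by
      simpa only [hrec] using h2
    exact tendsto_nhds_unique h3 h1
  constructor
  · intro hp2
    have hmono : Monotone α := by
      apply monotone_nat_of_le_succ
      intro n
      have h := hIoo n
      rw [hrec n]
      nlinarith [mul_nonneg (mul_nonneg h.1.le (by linarith [h.2] : (0:ℝ) ≤ 1 - α n))
        (by linarith : (0:ℝ) ≤ 2*p - 1)]
    have hbdd : BddAbove (Set.range α) := ⟨1, by rintro x ⟨n, rfl⟩; exact (hIoo n).2.le⟩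
    have hL := tendsto_atTop_ciSup hmono hbdd
    set L := ⨆ n, α n with hLdef
    have hfixL := hfix L hL
    have hge : α 0 ≤ L := le_ciSup hbdd 0
    have hle : L ≤ 1 := ciSup_le fun n => (hIoo n).2.le
    have hLeq : L = 1 := by
      rcases eq_or_lt_of_le hle with h | h
      · exact h
      · exfalso
        have hLpos : 0 < L := lt_of_lt_of_le h0.1 hge
        nlinarith [mul_pos hLpos (sub_pos.2 h)]
    rwa [hLeq] at hL
  · intro hp2
    have hmono : Antitone α := by
      apply antitone_nat_of_succ_le
      intro n
      have h := hIoo n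
      rw [hrec n]
      nlinarith [mul_nonneg (mul_nonneg h.1.le (by linarith [h.2] : (0:ℝ) ≤ 1 - α n))
        (by linarith : (0:ℝ) ≤ 1 - 2*p)]
    have hbdd : BddBelow (Set.range α) := ⟨0, by rintro x ⟨n, rfl⟩; exact (hIoo n).1.le⟩
    have hL := tendsto_atTop_ciInf hmono hbdd
    set L := ⨅ n, α n with hLdef
    have hfixL := hfix L hL
    have hle : L ≤ α 0 := ciInf_le hbdd 0
    have hge : 0 ≤ L := le_ciInf fun n => (hIoo n).1.le
    have hLeq : L = 0 := by
      rcases eq_or_lt_of_le hge with h | h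
      · exact h.symm
      · exfalso
        have hL1 : L < 1 := lt_of_le_of_lt hle h0.2
        nlinarith [mul_pos h (sub_pos.2 hL1)]
    rwa [hLeq] at hL
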